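/- arXiv:2305.15970 — 3 statements merged into one kernel-verified Lean document; each statement's English description precedes it below -/
import Mathlib

section
/- Let M₀,…,M_k be infinite Hermitian positive definite matrices such that β(M_j, M_{j-1}) < ∞ for all j = 1,…,k, where β is the limit of largest generalized eigenvalues of truncations, and assume the multiplication operator associated to each M_j is bounded. Then the set of zeros of the orthogonal polynomials for the matrix Sobolev inner product ⟨p,q⟩_S = Σ_{j=0}^k ⟨p^{(j)}, q^{(j)}⟩_{M_j} is bounded. -/
open Polynomial Filter

/-- The quadratic form `v M v*` of an infinite matrix on finitely supported vectors. -/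
noncomputable def quadForm (M : ℕ → ℕ → ℂ) (v : ℕ →₀ ℂ) : ℝ :=
  (∑ i ∈ v.support, ∑ j ∈ v.support, v i * M i j * (starRingEnd ℂ) (v j)).re

/-- The inner product `⟨p,q⟩_M = v M w*` on polynomials induced by an infinite matrix,
where `v`, `w` are the coefficient vectors of `p`, `q`. -/
noncomputable def matIP (M : ℕ → ℕ → ℂ) (p q : Polynomial ℂ) : ℂ :=
  ∑ i ∈ p.support, ∑ j ∈ q.support, p.coeff i * M i j * (starRingEnd ℂ) (q.coeff j)

section Aux

open Finset

/-- Cauchy–Schwarz for a positive sesquilinear form on polynomials. -/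
theorem form_cs (ip : Polynomial ℂ → Polynomial ℂ → ℂ)
    (hconj : ∀ p q, (starRingEnd ℂ) (ip p q) = ip q p)
    (hadd : ∀ p p' q, ip (p + p') q = ip p q + ip p' q)
    (hsmul : ∀ (c : ℂ) p q, ip (c • p) q = c * ip p q)
    (hnonneg : ∀ p, 0 ≤ (ip p p).re) (p q : Polynomial ℂ) :
    ‖ip p q‖ ≤ Real.sqrt ((ip p p).re) * Real.sqrt ((ip q q).re) := by
  let c : PreInnerProductSpace.Core ℂ (Polynomial ℂ) :=
    { inner := fun x y => ip y x
      conj_inner_symm := fun x y => hconj x y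
      re_inner_nonneg := fun x => hnonneg x
      add_left := fun x y z => by
        have : ip z (x + y) = ip z x + ip z y := by
          rw [← hconj (x+y) z, hadd, map_add, hconj, hconj]
        exact this
      smul_left := fun x y r => by
        show ip y (r • x) = _
        rw [← hconj (r • x) y, hsmul, map_mul, hconj] }
  have h := @InnerProductSpace.Core.norm_inner_le_norm ℂ (Polynomial ℂ) _ _ _ c q p
  rw [mul_comm]; exact h

theorem form_add_right (ip : Polynomial ℂ → Polynomial ℂ → ℂ)
    (hconj : ∀ p q, (starRingEnd ℂ) (ip p q) = ip q p)
    (hadd : ∀ p p' q, ip (p + p') q = ip p q + ip p' q)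
    (p q q' : Polynomial ℂ) : ip p (q + q') = ip p q + ip p q' := by
  rw [← hconj (q + q') p, hadd, map_add, hconj, hconj]

/-- Triangle inequality for the seminorm of a positive sesquilinear form. -/
theorem form_triangle (ip : Polynomial ℂ → Polynomial ℂ → ℂ)
    (hconj : ∀ p q, (starRingEnd ℂ) (ip p q) = ip q p)
    (hadd : ∀ p p' q, ip (p + p') q = ip p q + ip p' q)
    (hsmul : ∀ (c : ℂ) p q, ip (c • p) q = c * ip p q)
    (hnonneg : ∀ p, 0 ≤ (ip p p).re) (p q : Polynomial ℂ) :
    Real.sqrt ((ip (p + q) (p + q)).re) ≤ Real.sqrt ((ip p p).re) + Real.sqrt ((ip q q).re) := by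
  have expand : (ip (p + q) (p + q)).re
      = (ip p p).re + (ip q q).re + 2 * (ip p q).re := by
    rw [hadd, form_add_right ip hconj hadd, form_add_right ip hconj hadd]
    have : ip q p = (starRingEnd ℂ) (ip p q) := (hconj p q).symm
    rw [this]
    simp [Complex.add_re, Complex.conj_re]
    ring
  have h1 : (ip p q).re ≤ ‖ip p q‖ := Complex.re_le_norm _
  have h2 := form_cs ip hconj hadd hsmul hnonneg p q
  set a := Real.sqrt ((ip p p).re)
  set b := Real.sqrt ((ip q q).re)
  have ha : 0 ≤ a := Real.sqrt_nonneg _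
  have hb : 0 ≤ b := Real.sqrt_nonneg _
  have hpp : (ip p p).re = a ^ 2 := (Real.sq_sqrt (hnonneg p)).symm
  have hqq : (ip q q).re = b ^ 2 := (Real.sq_sqrt (hnonneg q)).symm
  have key : (ip (p + q) (p + q)).re ≤ (a + b) ^ 2 := by
    rw [expand, hpp, hqq]; nlinarith
  calc Real.sqrt ((ip (p + q) (p + q)).re) ≤ Real.sqrt ((a + b) ^ 2) :=
        Real.sqrt_le_sqrt key
    _ = a + b := Real.sqrt_sq (by positivity)

theorem matIP_eq_range (M : ℕ → ℕ → ℂ) (p q : Polynomial ℂ) (a b : ℕ)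
    (ha : p.natDegree < a) (hb : q.natDegree < b) :
    matIP M p q = ∑ i ∈ range a, ∑ j ∈ range b,
      p.coeff i * M i j * (starRingEnd ℂ) (q.coeff j) := by
  unfold matIP
  rw [Finset.sum_subset (supp_subset_range ha)]
  · refine Finset.sum_congr rfl fun i _ => ?_
    rw [Finset.sum_subset (supp_subset_range hb)]
    intro j _ hj
    rw [notMem_support_iff.mp hj]
    simp
  · intro i _ hi
    rw [notMem_support_iff.mp hi]
    simp

theorem matIP_add_left (M : ℕ → ℕ → ℂ) (p p' q : Polynomial ℂ) :
    matIP M (p + p') q = matIP M p q + matIP M p' q := by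
  set a := max (max p.natDegree p'.natDegree) (p + p').natDegree + 1 with ha
  have h1 : p.natDegree < a := by omega
  have h2 : p'.natDegree < a := by omega
  have h3 : (p + p').natDegree < a := by omega
  have hb : q.natDegree < q.natDegree + 1 := Nat.lt_succ_self _
  rw [matIP_eq_range M p q a _ h1 hb, matIP_eq_range M p' q a _ h2 hb,
    matIP_eq_range M (p + p') q a _ h3 hb, ← Finset.sum_add_distrib]
  refine Finset.sum_congr rfl fun i _ => ?_
  rw [← Finset.sum_add_distrib]
  refine Finset.sum_congr rfl fun j _ => ?_
  rw [coeff_add]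
  ring

theorem matIP_smul_left (M : ℕ → ℕ → ℂ) (c : ℂ) (p q : Polynomial ℂ) :
    matIP M (c • p) q = c * matIP M p q := by
  set a := max p.natDegree (c • p).natDegree + 1 with ha
  have h1 : p.natDegree < a := by omega
  have h2 : (c • p).natDegree < a := by omega
  have hb : q.natDegree < q.natDegree + 1 := Nat.lt_succ_self _
  rw [matIP_eq_range M p q a _ h1 hb, matIP_eq_range M (c • p) q a _ h2 hb,
    Finset.mul_sum]
  refine Finset.sum_congr rfl fun i _ => ?_
  rw [Finset.mul_sum]
  refine Finset.sum_congr rfl fun j _ => ?_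
  rw [coeff_smul]
  simp [smul_eq_mul]
  ring

theorem matIP_smul_right (M : ℕ → ℕ → ℂ) (c : ℂ) (p q : Polynomial ℂ) :
    matIP M p (c • q) = (starRingEnd ℂ) c * matIP M p q := by
  set b := max q.natDegree (c • q).natDegree + 1 with hbdef
  have h1 : q.natDegree < b := by omega
  have h2 : (c • q).natDegree < b := by omega
  have ha : p.natDegree < p.natDegree + 1 := Nat.lt_succ_self _
  rw [matIP_eq_range M p q _ b ha h1, matIP_eq_range M p (c • q) _ b ha h2,
    Finset.mul_sum]
  refine Finset.sum_congr rfl fun i _ => ?_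
  rw [Finset.mul_sum]
  refine Finset.sum_congr rfl fun j _ => ?_
  rw [coeff_smul]
  simp [smul_eq_mul]
  ring

theorem matIP_conj (M : ℕ → ℕ → ℂ) (hherm : ∀ i j, M i j = (starRingEnd ℂ) (M j i))
    (p q : Polynomial ℂ) : (starRingEnd ℂ) (matIP M p q) = matIP M q p := by
  unfold matIP
  rw [map_sum, Finset.sum_comm]
  refine Finset.sum_congr rfl fun j _ => ?_
  rw [map_sum]
  refine Finset.sum_congr rfl fun i _ => ?_
  simp only [map_mul, RingHomCompTriple.comp_apply, RingHom.id_apply]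
  rw [hherm i j]
  ring

theorem matIP_self_re (M : ℕ → ℕ → ℂ) (p : Polynomial ℂ) :
    (matIP M p p).re = quadForm M p.toFinsupp.coeff := rfl

theorem quad_compare (A B : ℕ → ℕ → ℂ)
    (hpdB : ∀ v : ℕ →₀ ℂ, v ≠ 0 → 0 < quadForm B v)
    (b : ℕ → ℝ)
    (hb : ∀ n, IsLUB {r : ℝ | ∃ v : ℕ →₀ ℂ, v ≠ 0 ∧ (∀ i ∈ v.support, i ≤ n) ∧
      r = quadForm A v / quadForm B v} (b n))
    (hfin : limsup (fun n => ((b n : ℝ) : EReal)) atTop ≠ ⊤) :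
    ∃ C : ℝ, 0 ≤ C ∧ ∀ v : ℕ →₀ ℂ, quadForm A v ≤ C * quadForm B v := by
  have hmono : Monotone b := by
    intro n m hnm
    refine (hb n).2 fun r hr => (hb m).1 ?_
    obtain ⟨v, hv, hsupp, hr⟩ := hr
    exact ⟨v, hv, fun i hi => le_trans (hsupp i hi) hnm, hr⟩
  have hbdd : ∃ C : ℝ, ∀ n, b n ≤ C := by
    by_contra h
    push_neg at h
    apply hfin
    have key : ∀ C : ℝ, (C : EReal) ≤ limsup (fun n => ((b n : ℝ) : EReal)) atTop := by
      intro C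
      obtain ⟨n, hn⟩ := h C
      have hev : ∀ᶠ m in atTop, (C : EReal) ≤ ((b m : ℝ) : EReal) := by
        filter_upwards [eventually_ge_atTop n] with m hm
        exact_mod_cast le_of_lt (lt_of_lt_of_le hn (hmono hm))
      exact le_limsup_of_frequently_le hev.frequently
    by_contra hx
    obtain ⟨C, hC1, _⟩ := EReal.exists_between_coe_real (lt_top_iff_ne_top.2 hx)
    exact absurd (key C) (not_le.2 hC1)
  obtain ⟨C, hC⟩ := hbdd
  refine ⟨max C 0, le_max_right _ _, fun v => ?_⟩
  by_cases hv : v = 0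
  · subst hv
    have h1 : quadForm A 0 = 0 := by simp [quadForm]
    have h2 : quadForm B 0 = 0 := by simp [quadForm]
    rw [h1, h2, mul_zero]
  · have hBpos := hpdB v hv
    have hmem : quadForm A v / quadForm B v ∈ {r : ℝ | ∃ w : ℕ →₀ ℂ, w ≠ 0 ∧
        (∀ i ∈ w.support, i ≤ v.support.sup id) ∧ r = quadForm A w / quadForm B w} :=
      ⟨v, hv, fun i hi => Finset.le_sup (f := id) hi, rfl⟩
    have hle : quadForm A v / quadForm B v ≤ max C 0 :=
      le_trans ((hb _).1 hmem) (le_trans (hC _) (le_max_left _ _))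
    calc quadForm A v = quadForm A v / quadForm B v * quadForm B v := by field_simp
      _ ≤ max C 0 * quadForm B v := mul_le_mul_of_nonneg_right hle (le_of_lt hBpos)

theorem iter_deriv_X_mul (j : ℕ) (q : Polynomial ℂ) :
    derivative^[j + 1] (X * q) =
      X * derivative^[j + 1] q + (j + 1 : ℂ) • derivative^[j] q := by
  induction j with
  | zero => simp [derivative_mul]; abel
  | succ j ih =>
    rw [Function.iterate_succ_apply' derivative (j + 1), ih]
    rw [map_add, derivative_mul, derivative_smul,
      ← Function.iterate_succ_apply' derivative (j + 1) q,
      ← Function.iterate_succ_apply' derivative j q,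
      derivative_X, one_mul]
    have : ((j : ℂ) + 1 + 1) • derivative^[j + 1] q
        = derivative^[j+1] q + ((j : ℂ) + 1) • derivative^[j+1] q := by
      rw [add_smul, one_smul]; abel
    push_cast
    rw [this]
    abel

end Aux

theorem stmt_10 (k : ℕ) (M : Fin (k + 1) → ℕ → ℕ → ℂ)
    (hherm : ∀ l, ∀ i j, M l i j = (starRingEnd ℂ) (M l j i))
    (hpd : ∀ l, ∀ v : ℕ →₀ ℂ, v ≠ 0 → 0 < quadForm (M l) v)
    (β : Fin k → ℕ → ℝ)
    (hβ : ∀ j : Fin k, ∀ n, IsLUB {r : ℝ | ∃ v : ℕ →₀ ℂ, v ≠ 0 ∧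
      (∀ i ∈ v.support, i ≤ n) ∧
      r = quadForm (M j.succ) v / quadForm (M j.castSucc) v} (β j n))
    (hβfin : ∀ j : Fin k, limsup (fun n => ((β j n : ℝ) : EReal)) atTop ≠ ⊤)
    (hbound : ∀ l : Fin (k + 1), ∃ D : ℝ, 0 < D ∧ ∀ p : Polynomial ℂ,
      (matIP (M l) (X * p) (X * p)).re ≤ D ^ 2 * (matIP (M l) p p).re)
    (S : Polynomial ℂ → Polynomial ℂ → ℂ)
    (hS : ∀ p q : Polynomial ℂ,
      S p q = ∑ j : Fin (k + 1), matIP (M j) (derivative^[j.val] p) (derivative^[j.val] q)) :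
    ∃ R : ℝ, 0 < R ∧ ∀ (n : ℕ) (φ : Polynomial ℂ), φ ≠ 0 → φ.natDegree = n →
      (∀ q : Polynomial ℂ, q.degree < n → S φ q = 0) →
      ∀ z₀ : ℂ, φ.eval z₀ = 0 → ‖z₀‖ < R := by
  classical
  -- iterated derivative is additive
  have dadd : ∀ (m : ℕ) (a b : Polynomial ℂ),
      derivative^[m] (a + b) = derivative^[m] a + derivative^[m] b := by
    intro m
    induction m with
    | zero => simp
    | succ m ih => intro a b; rw [Function.iterate_succ_apply', ih, map_add,
        Function.iterate_succ_apply', Function.iterate_succ_apply']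
  -- positivity facts
  have mnonneg : ∀ l (p : Polynomial ℂ), 0 ≤ (matIP (M l) p p).re := by
    intro l p
    by_cases hp : p = 0
    · subst hp; simp [matIP]
    · refine le_of_lt ?_
      rw [matIP_self_re]
      exact hpd l _ (fun h => hp (Polynomial.toFinsupp_eq_zero.mp (AddMonoidAlgebra.coeff_eq_zero.mp h)))
  have mpos : ∀ l (p : Polynomial ℂ), p ≠ 0 → 0 < (matIP (M l) p p).re := by
    intro l p hp
    rw [matIP_self_re]
    exact hpd l _ (fun h => hp (Polynomial.toFinsupp_eq_zero.mp (AddMonoidAlgebra.coeff_eq_zero.mp h)))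
  -- S properties
  have Sconj : ∀ p q, (starRingEnd ℂ) (S p q) = S q p := by
    intro p q
    rw [hS, hS, map_sum]
    exact Finset.sum_congr rfl fun l _ => matIP_conj _ (hherm l) _ _
  have Sadd : ∀ p p' q, S (p + p') q = S p q + S p' q := by
    intro p p' q
    rw [hS, hS, hS, ← Finset.sum_add_distrib]
    refine Finset.sum_congr rfl fun l _ => ?_
    rw [dadd, matIP_add_left]
  have Ssmul : ∀ (c : ℂ) p q, S (c • p) q = c * S p q := by
    intro c p q
    rw [hS, hS, Finset.mul_sum]
    refine Finset.sum_congr rfl fun l _ => ?_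
    rw [iterate_derivative_smul, matIP_smul_left]
  have Snonneg : ∀ p, 0 ≤ (S p p).re := by
    intro p
    rw [hS, Complex.re_sum]
    exact Finset.sum_nonneg fun l _ => mnonneg l _
  have Sterm_le : ∀ (l : Fin (k+1)) (p : Polynomial ℂ),
      (matIP (M l) (derivative^[l.val] p) (derivative^[l.val] p)).re ≤ (S p p).re := by
    intro l p
    rw [hS, Complex.re_sum]
    exact Finset.single_le_sum
      (f := fun i : Fin (k+1) => (matIP (M i) (derivative^[i.val] p) (derivative^[i.val] p)).re)
      (fun i _ => mnonneg i _) (Finset.mem_univ l)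
  have Spos : ∀ p, p ≠ 0 → 0 < (S p p).re := by
    intro p hp
    have h0 := mpos 0 p hp
    calc (0:ℝ) < (matIP (M 0) (derivative^[(0 : Fin (k+1)).val] p)
          (derivative^[(0 : Fin (k+1)).val] p)).re := by simpa using h0
      _ ≤ (S p p).re := Sterm_le 0 p
  -- constants
  choose D hDpos hD using hbound
  have hcomp : ∀ j : Fin k, ∃ C : ℝ, 0 ≤ C ∧ ∀ p : Polynomial ℂ,
      (matIP (M j.succ) p p).re ≤ C * (matIP (M j.castSucc) p p).re := by
    intro j
    obtain ⟨C, hC0, hC⟩ := quad_compare (M j.succ) (M j.castSucc)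
      (hpd j.castSucc) (β j) (hβ j) (hβfin j)
    exact ⟨C, hC0, fun p => by rw [matIP_self_re, matIP_self_re]; exact hC _⟩
  choose C hC0 hC using hcomp
  set E : Fin (k+1) → ℝ := fun l => D l + l.val *
      (if h : 0 < l.val then Real.sqrt (C ⟨l.val - 1, by omega⟩) else 0) with hE
  -- basic norm facts
  have hXb : ∀ (l : Fin (k+1)) (p : Polynomial ℂ),
      Real.sqrt ((matIP (M l) (X * p) (X * p)).re)
        ≤ D l * Real.sqrt ((matIP (M l) p p).re) := by
    intro l p
    have := Real.sqrt_le_sqrt (hD l p)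
    rwa [Real.sqrt_mul (sq_nonneg _), Real.sqrt_sq (hDpos l).le] at this
  have hsmulnorm : ∀ (l : Fin (k+1)) (r : ℝ) (_ : 0 ≤ r) (p : Polynomial ℂ),
      Real.sqrt ((matIP (M l) ((r : ℂ) • p) ((r : ℂ) • p)).re)
        = r * Real.sqrt ((matIP (M l) p p).re) := by
    intro l r hr p
    have heq : matIP (M l) ((r : ℂ) • p) ((r : ℂ) • p)
        = ((r ^ 2 : ℝ) : ℂ) * matIP (M l) p p := by
      rw [matIP_smul_left, matIP_smul_right, Complex.conj_ofReal]
      push_cast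
      ring
    rw [heq, Complex.re_ofReal_mul, Real.sqrt_mul (by positivity),
      Real.sqrt_sq hr]
  have hcompare : ∀ (j : Fin k) (p : Polynomial ℂ),
      Real.sqrt ((matIP (M j.succ) p p).re)
        ≤ Real.sqrt (C j) * Real.sqrt ((matIP (M j.castSucc) p p).re) := by
    intro j p
    have := Real.sqrt_le_sqrt (hC j p)
    rwa [Real.sqrt_mul (hC0 j)] at this
  -- the key estimate
  have key : ∀ (l : Fin (k+1)) (q : Polynomial ℂ),
      Real.sqrt ((matIP (M l) (derivative^[l.val] (X * q))
        (derivative^[l.val] (X * q))).re) ≤ E l * Real.sqrt ((S q q).re) := by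
    intro l q
    rcases Nat.eq_zero_or_pos l.val with h0 | hposl
    · have hE0 : E l = D l := by simp [hE, h0]
      rw [h0, hE0]
      calc Real.sqrt ((matIP (M l) (derivative^[0] (X * q))
            (derivative^[0] (X * q))).re)
          = Real.sqrt ((matIP (M l) (X * q) (X * q)).re) := by simp
        _ ≤ D l * Real.sqrt ((matIP (M l) q q).re) := hXb l q
        _ ≤ D l * Real.sqrt ((S q q).re) := by
            refine mul_le_mul_of_nonneg_left ?_ (hDpos l).le
            have := Sterm_le l q
            rw [h0] at this
            exact Real.sqrt_le_sqrt (by simpa using this)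
    · set m := l.val - 1 with hm
      have hlval : l.val = m + 1 := by omega
      have hmk : m < k := by have := l.isLt; omega
      set j : Fin k := ⟨m, hmk⟩ with hj
      have hjsucc : j.succ = l := by
        apply Fin.ext
        simp [hj, Fin.val_succ, hlval]
      have hEl : E l = D l + ((m : ℝ) + 1) * Real.sqrt (C j) := by
        simp only [hE, dif_pos hposl]
        show D l + (l.val : ℝ) * Real.sqrt (C j) = D l + ((m : ℝ) + 1) * Real.sqrt (C j)
        rw [hlval]
        push_cast
        ring
      -- expand the derivative
      have hder : derivative^[l.val] (X * q)
          = X * derivative^[m + 1] q + ((m : ℂ) + 1) • derivative^[m] q := by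
        rw [hlval]
        have := iter_deriv_X_mul m q
        push_cast at this ⊢
        exact this
      have tri := form_triangle (matIP (M l)) (matIP_conj _ (hherm l))
        (matIP_add_left _) (matIP_smul_left _) (mnonneg l)
        (X * derivative^[m + 1] q) (((m : ℂ) + 1) • derivative^[m] q)
      have hcast : ((m : ℂ) + 1) = (((m : ℝ) + 1 : ℝ) : ℂ) := by push_cast; ring
      have t1 : Real.sqrt ((matIP (M l) (X * derivative^[m + 1] q)
            (X * derivative^[m + 1] q)).re) ≤ D l * Real.sqrt ((S q q).re) := by
        refine le_trans (hXb l _) (mul_le_mul_of_nonneg_left ?_ (hDpos l).le)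
        have := Sterm_le l q
        rw [hlval] at this
        exact Real.sqrt_le_sqrt this
      have t2 : Real.sqrt ((matIP (M l) (((m : ℂ) + 1) • derivative^[m] q)
            (((m : ℂ) + 1) • derivative^[m] q)).re)
          ≤ ((m : ℝ) + 1) * (Real.sqrt (C j) * Real.sqrt ((S q q).re)) := by
        rw [hcast, hsmulnorm l _ (by positivity)]
        refine mul_le_mul_of_nonneg_left ?_ (by positivity)
        have hc1 : Real.sqrt ((matIP (M l) (derivative^[m] q)
              (derivative^[m] q)).re)
            ≤ Real.sqrt (C j) * Real.sqrt ((matIP (M j.castSucc)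
              (derivative^[m] q) (derivative^[m] q)).re) := by
          rw [← hjsucc]
          exact hcompare j _
        refine le_trans hc1 (mul_le_mul_of_nonneg_left ?_ (Real.sqrt_nonneg _))
        have hcs : (j.castSucc : Fin (k+1)).val = m := rfl
        have := Sterm_le j.castSucc q
        rw [hcs] at this
        exact Real.sqrt_le_sqrt this
      calc Real.sqrt ((matIP (M l) (derivative^[l.val] (X * q))
            (derivative^[l.val] (X * q))).re)
          ≤ Real.sqrt ((matIP (M l) (X * derivative^[m + 1] q)
              (X * derivative^[m + 1] q)).re)
            + Real.sqrt ((matIP (M l) (((m : ℂ) + 1) • derivative^[m] q)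
              (((m : ℂ) + 1) • derivative^[m] q)).re) := by
            rw [hder]; exact tri
        _ ≤ D l * Real.sqrt ((S q q).re)
            + ((m : ℝ) + 1) * (Real.sqrt (C j) * Real.sqrt ((S q q).re)) :=
            add_le_add t1 t2
        _ = E l * Real.sqrt ((S q q).re) := by rw [hEl]; ring
  -- sum the key estimate
  set A : ℝ := ∑ l : Fin (k+1), (E l) ^ 2 with hA
  have hEnonneg : ∀ l, 0 ≤ E l := by
    intro l
    refine add_nonneg (hDpos l).le (mul_nonneg (Nat.cast_nonneg _) ?_)
    split <;> positivity
  have hA0 : 0 ≤ A := Finset.sum_nonneg fun l _ => sq_nonneg _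
  have hSX : ∀ q : Polynomial ℂ, (S (X * q) (X * q)).re ≤ A * (S q q).re := by
    intro q
    rw [hS, Complex.re_sum]
    calc ∑ l : Fin (k+1), (matIP (M l) (derivative^[l.val] (X * q))
          (derivative^[l.val] (X * q))).re
        ≤ ∑ l : Fin (k+1), (E l * Real.sqrt ((S q q).re)) ^ 2 := by
          refine Finset.sum_le_sum fun l _ => ?_
          have h1 : (matIP (M l) (derivative^[l.val] (X * q))
              (derivative^[l.val] (X * q))).re
              = (Real.sqrt ((matIP (M l) (derivative^[l.val] (X * q))
                (derivative^[l.val] (X * q))).re)) ^ 2 :=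
            (Real.sq_sqrt (mnonneg l _)).symm
          rw [h1]
          exact pow_le_pow_left₀ (Real.sqrt_nonneg _) (key l q) 2
      _ = A * (S q q).re := by
          rw [hA, Finset.sum_mul]
          refine Finset.sum_congr rfl fun l _ => ?_
          rw [mul_pow, Real.sq_sqrt (Snonneg q)]
  -- final bound
  refine ⟨Real.sqrt A + 1, by positivity, ?_⟩
  intro n φ hφ hdeg horth z₀ hroot
  rcases Nat.eq_zero_or_pos n with hn | hn
  · exfalso
    subst hn
    have hφC : φ = Polynomial.C (φ.coeff 0) := eq_C_of_natDegree_eq_zero hdeg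
    rw [hφC] at hroot
    simp at hroot
    exact hφ (by rw [hφC, hroot, map_zero])
  · set q := φ / (X - Polynomial.C z₀) with hqdef
    have hfac : (X - Polynomial.C z₀) * q = φ := mul_div_eq_iff_isRoot.mpr hroot
    have hq : q ≠ 0 := by
      intro h
      rw [h, mul_zero] at hfac
      exact hφ hfac.symm
    have hdq : q.natDegree < n := by
      have hXC : (X - Polynomial.C z₀ : Polynomial ℂ) ≠ 0 := X_sub_C_ne_zero z₀
      have := natDegree_mul hXC hq
      rw [hfac, hdeg, natDegree_X_sub_C] at this
      omega
    have hdeglt : q.degree < (n : ℕ) := (natDegree_lt_iff_degree_lt hq).mp hdq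
    have h0 := horth q hdeglt
    have hexp : φ = X * q + (-z₀) • q := by
      rw [← hfac, sub_mul, smul_eq_C_mul, map_neg]
      ring
    have horthEq : S (X * q) q = z₀ * S q q := by
      rw [hexp, Sadd, Ssmul] at h0
      have : S (X * q) q = - (-z₀ * S q q) := by linear_combination h0
      rw [this]; ring
    have hSqq := Spos q hq
    have hreal : S q q = (((S q q).re : ℝ) : ℂ) := by
      have himag : (S q q).im = 0 := Complex.conj_eq_iff_im.mp (Sconj q q)
      exact Complex.ext (by simp) (by simp [himag])
    have habs : ‖S (X * q) q‖ = ‖z₀‖ * (S q q).re := by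
      rw [horthEq, norm_mul]
      congr 1
      rw [hreal, Complex.norm_real, Real.norm_eq_abs, abs_of_nonneg (Snonneg q)]
      simp
    have hCS := form_cs S Sconj Sadd Ssmul Snonneg (X * q) q
    have h1 : Real.sqrt ((S (X * q) (X * q)).re)
        ≤ Real.sqrt A * Real.sqrt ((S q q).re) := by
      rw [← Real.sqrt_mul hA0]
      exact Real.sqrt_le_sqrt (hSX q)
    have h2 : ‖S (X * q) q‖ ≤ Real.sqrt A * (S q q).re := by
      calc ‖S (X * q) q‖
          ≤ Real.sqrt ((S (X * q) (X * q)).re) * Real.sqrt ((S q q).re) := hCS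
        _ ≤ Real.sqrt A * Real.sqrt ((S q q).re) * Real.sqrt ((S q q).re) :=
            mul_le_mul_of_nonneg_right h1 (Real.sqrt_nonneg _)
        _ = Real.sqrt A * (S q q).re := by
            rw [mul_assoc, Real.mul_self_sqrt (Snonneg q)]
    rw [habs] at h2
    have hfin : ‖z₀‖ ≤ Real.sqrt A :=
      le_of_mul_le_mul_right (by linarith) hSqq
    linarith
end

section
/- Let μ be a positive Borel measure on ℂ with compact infinite support, and let λₙ be the smallest eigenvalue of the (n+1)×(n+1) truncation of the moment matrix M(μ). If lim_{n→∞} λₙ > 0, then the multiplication operator is bounded for the Sobolev inner product ⟨p,q⟩_S = ∫ p q̄ dμ + ∫ p' q̄' dm, where m is the normalized Lebesgue measure on the unit circle, and hence the zeros of the associated Sobolev orthogonal polynomials are uniformly bounded. -/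
open Polynomial MeasureTheory Filter Real

/-- The (closed) support of a measure on ℂ: points all of whose neighbourhoods have
positive measure. -/
def msupp (ν : MeasureTheory.Measure ℂ) : Set ℂ := {z | ∀ U ∈ nhds z, ν U ≠ 0}

noncomputable section StmtTwelveAux

private lemma poly_bound (s : Set ℂ) (hs : IsCompact s) (p : Polynomial ℂ) :
    ∃ C : ℝ, 0 ≤ C ∧ ∀ z ∈ s, ‖p.eval z‖ ≤ C := by
  obtain ⟨C, hC⟩ := hs.exists_bound_of_continuousOn (p.continuous_aeval.continuousOn)
  exact ⟨max C 0, le_max_right _ _, fun z hz => le_trans (by simpa using hC z hz) (le_max_left _ _)⟩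

private lemma ae_mem_msupp (μ : Measure ℂ) (hfull : μ (msupp μ)ᶜ = 0) :
    ∀ᵐ z ∂μ, z ∈ msupp μ := by
  rw [MeasureTheory.ae_iff]
  simpa [Set.compl_def] using hfull

private lemma memLp_mu (μ : Measure ℂ) [IsFiniteMeasure μ] (hcmp : IsCompact (msupp μ))
    (hfull : μ (msupp μ)ᶜ = 0) (p : Polynomial ℂ) :
    MemLp (fun z => p.eval z) 2 μ := by
  obtain ⟨C, _, hC⟩ := poly_bound _ hcmp p
  refine MemLp.of_bound (p.continuous_aeval.aestronglyMeasurable) C ?_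
  filter_upwards [ae_mem_msupp μ hfull] with z hz using hC z hz

private lemma integrable_sq_mu (μ : Measure ℂ) [IsFiniteMeasure μ] (hcmp : IsCompact (msupp μ))
    (hfull : μ (msupp μ)ᶜ = 0) (p : Polynomial ℂ) :
    Integrable (fun z => ‖p.eval z‖ ^ 2) μ := by
  obtain ⟨C, _, hC⟩ := poly_bound _ hcmp p
  refine memLp_one_iff_integrable.mp (MemLp.of_bound
    ((p.continuous_aeval.norm.pow 2).aestronglyMeasurable) (C ^ 2) ?_)
  filter_upwards [ae_mem_msupp μ hfull] with z hz
  have h1 := hC z hz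
  have h0 : (0:ℝ) ≤ ‖p.eval z‖ := norm_nonneg _
  simp only [norm_pow, norm_norm]
  nlinarith

private lemma integral_sq_pos (μ : Measure ℂ) [IsFiniteMeasure μ] (hcmp : IsCompact (msupp μ))
    (hinf : (msupp μ).Infinite) (hfull : μ (msupp μ)ᶜ = 0) (p : Polynomial ℂ) (hp : p ≠ 0) :
    0 < ∫ z, ‖p.eval z‖ ^ 2 ∂μ := by
  obtain ⟨z₀, hz₀s, hz₀r⟩ := (hinf.diff (p.finite_setOf_isRoot hp)).nonempty
  have hz₀ : p.eval z₀ ≠ 0 := fun h => hz₀r h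
  set ε : ℝ := ‖p.eval z₀‖ ^ 2 / 2 with hε
  have hεpos : 0 < ε := by
    have : 0 < ‖p.eval z₀‖ := norm_pos_iff.mpr hz₀
    positivity
  set U : Set ℂ := {z | ε < ‖p.eval z‖ ^ 2} with hU
  have hUopen : IsOpen U := isOpen_lt continuous_const ((p.continuous_aeval.norm.pow 2))
  have hz₀U : z₀ ∈ U := by
    have : 0 < ‖p.eval z₀‖ := norm_pos_iff.mpr hz₀
    simp only [hU, Set.mem_setOf_eq, hε]
    nlinarith
  have hμU : μ U ≠ 0 := hz₀s U (hUopen.mem_nhds hz₀U)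
  have hμUtop : μ U ≠ ⊤ := measure_ne_top μ U
  have hint := integrable_sq_mu μ hcmp hfull p
  have h1 : ε * (μ U).toReal ≤ ∫ z in U, ‖p.eval z‖ ^ 2 ∂μ := by
    refine setIntegral_ge_of_const_le_real hUopen.measurableSet hμUtop
      (fun z hz => le_of_lt hz) hint.integrableOn
  have h2 : ∫ z in U, ‖p.eval z‖ ^ 2 ∂μ ≤ ∫ z, ‖p.eval z‖ ^ 2 ∂μ :=
    setIntegral_le_integral hint (Filter.Eventually.of_forall fun z => by positivity)
  have h3 : 0 < (μ U).toReal := ENNReal.toReal_pos hμU hμUtop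
  nlinarith

private lemma mul_bound_mu (μ : Measure ℂ) [IsFiniteMeasure μ] (hcmp : IsCompact (msupp μ))
    (hfull : μ (msupp μ)ᶜ = 0) (R : ℝ) (hR : ∀ z ∈ msupp μ, ‖z‖ ≤ R) (p : Polynomial ℂ) :
    ∫ z, ‖(X * p).eval z‖ ^ 2 ∂μ ≤ R ^ 2 * ∫ z, ‖p.eval z‖ ^ 2 ∂μ := by
  have h := integrable_sq_mu μ hcmp hfull p
  calc ∫ z, ‖(X * p).eval z‖ ^ 2 ∂μ ≤ ∫ z, R ^ 2 * ‖p.eval z‖ ^ 2 ∂μ := by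
        refine integral_mono_ae (integrable_sq_mu μ hcmp hfull (X * p)) (h.const_mul _) ?_
        filter_upwards [ae_mem_msupp μ hfull] with z hz
        have h1 : ‖z‖ ≤ R := hR z hz
        have h2 : (0:ℝ) ≤ ‖z‖ := norm_nonneg _
        have h3 : (0:ℝ) ≤ ‖p.eval z‖ := norm_nonneg _
        simp only [eval_mul, eval_X, norm_mul, mul_pow]
        have h4 : ‖z‖ ^ 2 ≤ R ^ 2 := by nlinarith
        exact mul_le_mul_of_nonneg_right h4 (sq_nonneg _)
    _ = R ^ 2 * ∫ z, ‖p.eval z‖ ^ 2 ∂μ := integral_const_mul _ _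

private lemma circle_meas : Measurable (fun θ : ℝ => Complex.exp (θ * Complex.I)) :=
  (Complex.continuous_exp.comp (Complex.continuous_ofReal.mul continuous_const)).measurable

private lemma circle_cont : Continuous (fun θ : ℝ => Complex.exp (θ * Complex.I)) :=
  Complex.continuous_exp.comp (Complex.continuous_ofReal.mul continuous_const)

private lemma m_finite (m : Measure ℂ)
    (hm : m = Measure.map (fun θ : ℝ => Complex.exp (θ * Complex.I))
      ((ENNReal.ofReal (2 * π))⁻¹ • volume.restrict (Set.Ioc (0 : ℝ) (2 * π)))) :
    IsFiniteMeasure m := by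
  constructor
  rw [hm, Measure.map_apply circle_meas MeasurableSet.univ]
  simp only [Set.preimage_univ, Measure.smul_apply, Measure.restrict_apply MeasurableSet.univ,
    Set.univ_inter, Real.volume_Ioc, smul_eq_mul]
  exact ENNReal.mul_lt_top
    (ENNReal.inv_lt_top.mpr (ENNReal.ofReal_pos.mpr (by positivity)))
    ENNReal.ofReal_lt_top

private lemma m_map_integral {G : Type*} [NormedAddCommGroup G] [NormedSpace ℝ G]
    (m : Measure ℂ)
    (hm : m = Measure.map (fun θ : ℝ => Complex.exp (θ * Complex.I))
      ((ENNReal.ofReal (2 * π))⁻¹ • volume.restrict (Set.Ioc (0 : ℝ) (2 * π))))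
    (g : ℂ → G) (hg : Continuous g) :
    ∫ z, g z ∂m = (2 * π)⁻¹ • ∫ θ in Set.Ioc (0:ℝ) (2*π), g (Complex.exp (θ * Complex.I)) := by
  rw [hm, integral_map circle_meas.aemeasurable hg.aestronglyMeasurable,
    integral_smul_measure]
  congr 1
  rw [ENNReal.toReal_inv, ENNReal.toReal_ofReal (by positivity)]

private lemma m_ae_norm_one (m : Measure ℂ)
    (hm : m = Measure.map (fun θ : ℝ => Complex.exp (θ * Complex.I))
      ((ENNReal.ofReal (2 * π))⁻¹ • volume.restrict (Set.Ioc (0 : ℝ) (2 * π)))) :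
    ∀ᵐ z ∂m, ‖z‖ = 1 := by
  rw [MeasureTheory.ae_iff, hm,
    Measure.map_apply circle_meas (by
      have : {z : ℂ | ¬ ‖z‖ = 1} = (norm ⁻¹' {(1:ℝ)})ᶜ := by ext z; simp
      rw [this]
      exact (measurable_norm (measurableSet_singleton 1)).compl)]
  have : (fun θ : ℝ => Complex.exp (θ * Complex.I)) ⁻¹' {z : ℂ | ¬ ‖z‖ = 1} = ∅ := by
    ext θ
    simp [Complex.norm_exp_ofReal_mul_I]
  simp [this]

private lemma memLp_m (m : Measure ℂ)
    (hm : m = Measure.map (fun θ : ℝ => Complex.exp (θ * Complex.I))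
      ((ENNReal.ofReal (2 * π))⁻¹ • volume.restrict (Set.Ioc (0 : ℝ) (2 * π))))
    (p : Polynomial ℂ) :
    MemLp (fun z => p.eval z) 2 m := by
  haveI := m_finite m hm
  obtain ⟨C, _, hC⟩ := poly_bound (Metric.sphere 0 1) (isCompact_sphere 0 1) p
  refine MemLp.of_bound p.continuous.aestronglyMeasurable C ?_
  filter_upwards [m_ae_norm_one m hm] with z hz
  exact hC z (mem_sphere_zero_iff_norm.mpr hz)

private lemma conj_exp_circle (θ : ℝ) :
    (starRingEnd ℂ) (Complex.exp (θ * Complex.I)) = Complex.exp (-(θ * Complex.I)) := by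
  rw [← Complex.exp_conj]
  congr 1
  simp [map_mul, Complex.conj_ofReal, Complex.conj_I]

private lemma circle_pow (θ : ℝ) (i j : ℕ) :
    (Complex.exp (θ * Complex.I)) ^ i * ((starRingEnd ℂ) (Complex.exp (θ * Complex.I))) ^ j
      = Complex.exp ((((i:ℂ) - j) * Complex.I) * θ) := by
  rw [conj_exp_circle, ← Complex.exp_nat_mul, ← Complex.exp_nat_mul, ← Complex.exp_add]
  congr 1
  ring

private lemma J_eq (i j : ℕ) :
    (∫ θ in Set.Ioc (0:ℝ) (2*π),
      (Complex.exp (θ * Complex.I)) ^ i * ((starRingEnd ℂ) (Complex.exp (θ * Complex.I))) ^ j)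
      = if i = j then ((2*π : ℝ) : ℂ) else 0 := by
  have h2π : (0:ℝ) ≤ 2 * π := by positivity
  rw [setIntegral_congr_fun measurableSet_Ioc (fun θ _ => circle_pow θ i j)]
  by_cases hij : i = j
  · subst hij
    simp only [sub_self, zero_mul, Complex.exp_zero, if_pos rfl]
    rw [MeasureTheory.setIntegral_const]
    simp [Real.volume_Ioc, ENNReal.toReal_ofReal h2π, Complex.real_smul, max_eq_left h2π]
  · rw [← intervalIntegral.integral_of_le h2π]
    have hc : ((i:ℂ) - j) * Complex.I ≠ 0 := by
      refine mul_ne_zero (sub_ne_zero.mpr ?_) Complex.I_ne_zero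
      exact_mod_cast fun h => hij (Nat.cast_injective h)
    rw [integral_exp_mul_complex hc]
    have h1 : Complex.exp (((i:ℂ) - j) * Complex.I * ((2:ℝ)*π : ℝ)) = 1 := by
      have := Complex.exp_int_mul_two_pi_mul_I ((i:ℤ) - j)
      rw [← this]
      congr 1
      push_cast
      ring
    simp only [Complex.ofReal_mul, Complex.ofReal_ofNat] at h1 ⊢
    rw [h1]
    simp [hij]

private lemma parseval_complex (p : Polynomial ℂ) :
    (∫ θ in Set.Ioc (0:ℝ) (2*π),
        p.eval (Complex.exp (θ * Complex.I)) *
          (starRingEnd ℂ) (p.eval (Complex.exp (θ * Complex.I))))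
      = (((∑ i ∈ Finset.range (p.natDegree+1), ‖p.coeff i‖^2) * (2*π) : ℝ) : ℂ) := by
  set N := p.natDegree + 1 with hN
  have hcont : ∀ i j : ℕ, Continuous fun θ : ℝ =>
      (Complex.exp (θ * Complex.I)) ^ i * ((starRingEnd ℂ) (Complex.exp (θ * Complex.I))) ^ j :=
    fun i j => (circle_cont.pow i).mul ((continuous_star.comp circle_cont).pow j)
  have hexp : ∀ θ : ℝ, p.eval (Complex.exp (θ * Complex.I)) *
      (starRingEnd ℂ) (p.eval (Complex.exp (θ * Complex.I)))
      = ∑ i ∈ Finset.range N, ∑ j ∈ Finset.range N,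
          (p.coeff i * (starRingEnd ℂ) (p.coeff j)) *
            ((Complex.exp (θ * Complex.I)) ^ i *
              ((starRingEnd ℂ) (Complex.exp (θ * Complex.I))) ^ j) := by
    intro θ
    rw [eval_eq_sum_range, map_sum, Finset.sum_mul_sum]
    refine Finset.sum_congr rfl fun i _ => Finset.sum_congr rfl fun j _ => ?_
    simp only [map_mul, map_pow]
    ring
  rw [setIntegral_congr_fun measurableSet_Ioc (fun θ _ => hexp θ)]
  rw [integral_finset_sum _ (fun i _ => ?_)]
  swap
  · refine Continuous.integrableOn_Ioc ?_
    exact continuous_finset_sum _ fun j _ => continuous_const.mul (hcont i j)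
  have : ∀ i ∈ Finset.range N,
      (∫ θ in Set.Ioc (0:ℝ) (2*π), ∑ j ∈ Finset.range N,
        (p.coeff i * (starRingEnd ℂ) (p.coeff j)) *
          ((Complex.exp (θ * Complex.I)) ^ i *
            ((starRingEnd ℂ) (Complex.exp (θ * Complex.I))) ^ j))
      = (p.coeff i * (starRingEnd ℂ) (p.coeff i)) * ((2*π : ℝ) : ℂ) := by
    intro i hi
    rw [integral_finset_sum _ (f := fun j (θ : ℝ) => (p.coeff i * (starRingEnd ℂ) (p.coeff j)) *
      ((Complex.exp (θ * Complex.I)) ^ i * ((starRingEnd ℂ) (Complex.exp (θ * Complex.I))) ^ j))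
      (fun j _ => (continuous_const.mul (hcont i j)).integrableOn_Ioc)]
    have : ∀ j ∈ Finset.range N,
        (∫ θ in Set.Ioc (0:ℝ) (2*π),
          (p.coeff i * (starRingEnd ℂ) (p.coeff j)) *
            ((Complex.exp (θ * Complex.I)) ^ i *
              ((starRingEnd ℂ) (Complex.exp (θ * Complex.I))) ^ j))
        = if i = j then (p.coeff i * (starRingEnd ℂ) (p.coeff j)) * ((2*π : ℝ) : ℂ) else 0 := by
      intro j _
      rw [integral_const_mul, J_eq i j]
      split_ifs with h
      · rfl
      · exact mul_zero _
    rw [Finset.sum_congr rfl this]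
    simp [Finset.sum_ite_eq, Finset.mem_range.mp hi]
  rw [Finset.sum_congr rfl this]
  have hc : ∀ i : ℕ, p.coeff i * (starRingEnd ℂ) (p.coeff i) = ((‖p.coeff i‖^2 : ℝ) : ℂ) := by
    intro i
    rw [Complex.mul_conj, Complex.normSq_eq_norm_sq]
  simp_rw [hc]
  rw [← Finset.sum_mul]
  push_cast
  ring

private lemma parseval (m : Measure ℂ)
    (hm : m = Measure.map (fun θ : ℝ => Complex.exp (θ * Complex.I))
      ((ENNReal.ofReal (2 * π))⁻¹ • volume.restrict (Set.Ioc (0 : ℝ) (2 * π))))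
    (p : Polynomial ℂ) :
    ∫ z, ‖p.eval z‖ ^ 2 ∂m = ∑ i ∈ Finset.range (p.natDegree+1), ‖p.coeff i‖^2 := by
  rw [m_map_integral m hm (fun z => ‖p.eval z‖ ^ 2) (p.continuous.norm.pow 2)]
  have hint : IntegrableOn (fun θ : ℝ => p.eval (Complex.exp (θ * Complex.I)) *
      (starRingEnd ℂ) (p.eval (Complex.exp (θ * Complex.I)))) (Set.Ioc (0:ℝ) (2*π)) volume :=
    ((p.continuous.comp circle_cont).mul
      ((continuous_star.comp (p.continuous.comp circle_cont)))).integrableOn_Ioc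
  have h3 : (∫ θ in Set.Ioc (0:ℝ) (2*π), ‖p.eval (Complex.exp (θ * Complex.I))‖^2 : ℝ)
      = (∑ i ∈ Finset.range (p.natDegree+1), ‖p.coeff i‖^2) * (2*π) := by
    have hpt := setIntegral_congr_fun (μ := volume) (s := Set.Ioc (0:ℝ) (2*π)) measurableSet_Ioc
      (f := fun θ : ℝ => ‖p.eval (Complex.exp (θ * Complex.I))‖^2)
      (g := fun θ : ℝ => RCLike.re (p.eval (Complex.exp (θ * Complex.I)) *
        (starRingEnd ℂ) (p.eval (Complex.exp (θ * Complex.I)))))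
      (fun θ _ => by simp [Complex.mul_conj, Complex.normSq_eq_norm_sq, ← Complex.ofReal_pow])
    rw [hpt, integral_re hint, parseval_complex]
    simp [← Complex.ofReal_pow, Complex.ofReal_re]
  rw [h3, smul_eq_mul]
  have hπ : (2*π) ≠ 0 := by positivity
  field_simp

private lemma deriv_bound_m (m : Measure ℂ)
    (hm : m = Measure.map (fun θ : ℝ => Complex.exp (θ * Complex.I))
      ((ENNReal.ofReal (2 * π))⁻¹ • volume.restrict (Set.Ioc (0 : ℝ) (2 * π))))
    (p : Polynomial ℂ) :
    ∫ z, ‖(derivative (X * p)).eval z‖ ^ 2 ∂m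
      ≤ 2 * ∫ z, ‖p.eval z‖ ^ 2 ∂m + 2 * ∫ z, ‖(derivative p).eval z‖ ^ 2 ∂m := by
  rw [m_map_integral m hm (fun z => ‖(derivative (X * p)).eval z‖ ^ 2) ((derivative (X * p)).continuous.norm.pow 2),
      m_map_integral m hm (fun z => ‖p.eval z‖ ^ 2) (p.continuous.norm.pow 2),
      m_map_integral m hm (fun z => ‖(derivative p).eval z‖ ^ 2) ((derivative p).continuous.norm.pow 2)]
  have hc0 : Continuous fun θ : ℝ => ‖(derivative (X * p)).eval (Complex.exp (θ * Complex.I))‖ ^ 2 :=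
    (((derivative (X * p)).continuous.comp circle_cont).norm.pow 2)
  have hc1 : Continuous fun θ : ℝ => ‖p.eval (Complex.exp (θ * Complex.I))‖ ^ 2 :=
    ((p.continuous.comp circle_cont).norm.pow 2)
  have hc2 : Continuous fun θ : ℝ => ‖(derivative p).eval (Complex.exp (θ * Complex.I))‖ ^ 2 :=
    (((derivative p).continuous.comp circle_cont).norm.pow 2)
  have key : (∫ θ in Set.Ioc (0:ℝ) (2*π), ‖(derivative (X * p)).eval (Complex.exp (θ * Complex.I))‖ ^ 2)
      ≤ ∫ θ in Set.Ioc (0:ℝ) (2*π),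
          (2 * ‖p.eval (Complex.exp (θ * Complex.I))‖ ^ 2
            + 2 * ‖(derivative p).eval (Complex.exp (θ * Complex.I))‖ ^ 2) := by
    refine setIntegral_mono_on hc0.integrableOn_Ioc
      (((continuous_const.mul hc1).add (continuous_const.mul hc2)).integrableOn_Ioc) measurableSet_Ioc ?_
    intro θ _
    have hd : derivative (X * p) = p + X * derivative p := by
      rw [derivative_mul, derivative_X, one_mul]
    have hw : ‖Complex.exp ((θ:ℂ) * Complex.I)‖ = 1 := by
      rw [Complex.norm_exp_ofReal_mul_I]
    rw [hd]
    simp only [eval_add, eval_mul, eval_X]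
    set a := p.eval (Complex.exp (θ * Complex.I))
    set b := (derivative p).eval (Complex.exp (θ * Complex.I))
    have h1 : ‖a + Complex.exp ((θ:ℂ) * Complex.I) * b‖ ≤ ‖a‖ + ‖b‖ := by
      calc ‖a + Complex.exp ((θ:ℂ) * Complex.I) * b‖ ≤ ‖a‖ + ‖Complex.exp ((θ:ℂ) * Complex.I) * b‖ :=
            norm_add_le _ _
        _ = ‖a‖ + ‖b‖ := by rw [norm_mul, hw, one_mul]
    have h2 : (0:ℝ) ≤ ‖a + Complex.exp ((θ:ℂ) * Complex.I) * b‖ := norm_nonneg _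
    nlinarith [norm_nonneg a, norm_nonneg b, sq_nonneg (‖a‖ - ‖b‖)]
  have hsplit : (∫ θ in Set.Ioc (0:ℝ) (2*π),
      (2 * ‖p.eval (Complex.exp (θ * Complex.I))‖ ^ 2
        + 2 * ‖(derivative p).eval (Complex.exp (θ * Complex.I))‖ ^ 2))
      = 2 * (∫ θ in Set.Ioc (0:ℝ) (2*π), ‖p.eval (Complex.exp (θ * Complex.I))‖ ^ 2)
        + 2 * ∫ θ in Set.Ioc (0:ℝ) (2*π), ‖(derivative p).eval (Complex.exp (θ * Complex.I))‖ ^ 2 := by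
    rw [integral_add ((hc1.integrableOn_Ioc).const_mul 2) ((hc2.integrableOn_Ioc).const_mul 2),
      integral_const_mul, integral_const_mul]
  have hπ : (0:ℝ) ≤ (2*π)⁻¹ := by positivity
  have := mul_le_mul_of_nonneg_left key hπ
  rw [hsplit] at this
  simp only [smul_eq_mul]
  nlinarith [this]

private lemma coeff_bound (μ : Measure ℂ) [IsFiniteMeasure μ]
    (lam : ℕ → ℝ)
    (hlam : ∀ n : ℕ, IsGLB {r : ℝ | ∃ p : Polynomial ℂ, p ≠ 0 ∧ p.degree ≤ n ∧
      r = (∫ z, ‖p.eval z‖ ^ 2 ∂μ) / ∑ i ∈ Finset.range (n + 1), ‖p.coeff i‖ ^ 2} (lam n))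
    (L : ℝ) (hL : 0 < L) (hlim : Tendsto lam atTop (nhds L)) (p : Polynomial ℂ) :
    L * (∑ i ∈ Finset.range (p.natDegree + 1), ‖p.coeff i‖ ^ 2) ≤ ∫ z, ‖p.eval z‖ ^ 2 ∂μ := by
  by_cases hp : p = 0
  · subst hp
    simp [Polynomial.eval_zero]
  · set n := p.natDegree with hn
    have hmono : ∀ k, lam (k + 1) ≤ lam k := by
      intro k
      refine (hlam k).2 ?_
      intro r hr
      obtain ⟨q, hq0, hqdeg, hqr⟩ := hr
      refine (hlam (k + 1)).1 ⟨q, hq0, ?_, ?_⟩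
      · exact hqdeg.trans (by exact_mod_cast Nat.cast_le.mpr (Nat.le_succ k))
      · rw [hqr]
        congr 1
        rw [Finset.sum_range_succ (n := k + 1)]
        have : q.coeff (k + 1) = 0 :=
          coeff_eq_zero_of_degree_lt (lt_of_le_of_lt hqdeg (by exact_mod_cast Nat.lt_succ_self k))
        simp [this]
    have hanti : Antitone lam := antitone_nat_of_succ_le hmono
    have hLn : L ≤ lam n :=
      le_of_tendsto hlim (eventually_atTop.mpr ⟨n, fun k hk => hanti hk⟩)
    set Q0 : ℝ := ∑ i ∈ Finset.range (n + 1), ‖p.coeff i‖ ^ 2 with hQ0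
    have hQ0pos : 0 < Q0 := by
      have h1 : 0 < ‖p.coeff n‖ ^ 2 := by
        have hcn : p.coeff n ≠ 0 := by
          rw [hn]
          exact mt leadingCoeff_eq_zero.mp hp
        have : 0 < ‖p.coeff n‖ := norm_pos_iff.mpr hcn
        positivity
      refine lt_of_lt_of_le h1 (Finset.single_le_sum (f := fun i => ‖p.coeff i‖ ^ 2)
        (fun i _ => by positivity) (Finset.self_mem_range_succ n))
    have hmem : (∫ z, ‖p.eval z‖ ^ 2 ∂μ) / Q0 ∈
        {r : ℝ | ∃ q : Polynomial ℂ, q ≠ 0 ∧ q.degree ≤ n ∧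
          r = (∫ z, ‖q.eval z‖ ^ 2 ∂μ) / ∑ i ∈ Finset.range (n + 1), ‖q.coeff i‖ ^ 2} :=
      ⟨p, hp, degree_le_natDegree, rfl⟩
    have h1 : lam n ≤ (∫ z, ‖p.eval z‖ ^ 2 ∂μ) / Q0 := (hlam n).1 hmem
    have h2 : L ≤ (∫ z, ‖p.eval z‖ ^ 2 ∂μ) / Q0 := hLn.trans h1
    calc L * Q0 ≤ ((∫ z, ‖p.eval z‖ ^ 2 ∂μ) / Q0) * Q0 :=
          mul_le_mul_of_nonneg_right h2 hQ0pos.le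
      _ = ∫ z, ‖p.eval z‖ ^ 2 ∂μ := by field_simp

private lemma integral_mul_conj_re (ν : Measure ℂ) (f : ℂ → ℂ)
    (hf : Integrable (fun z => f z * (starRingEnd ℂ) (f z)) ν) :
    (∫ z, f z * (starRingEnd ℂ) (f z) ∂ν).re = ∫ z, ‖f z‖ ^ 2 ∂ν := by
  rw [← RCLike.re_to_complex, ← integral_re hf]
  refine integral_congr_ae (Filter.Eventually.of_forall fun z => ?_)
  simp [Complex.mul_conj, Complex.normSq_eq_norm_sq, ← Complex.ofReal_pow]

private lemma integrable_mul_conj (ν : Measure ℂ) [IsFiniteMeasure ν] (f g : ℂ → ℂ)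
    (hf : Continuous f) (hg : Continuous g) (Cf Cg : ℝ)
    (hCf : ∀ᵐ z ∂ν, ‖f z‖ ≤ Cf) (hCg : ∀ᵐ z ∂ν, ‖g z‖ ≤ Cg) :
    Integrable (fun z => f z * (starRingEnd ℂ) (g z)) ν := by
  refine memLp_one_iff_integrable.mp (MemLp.of_bound
    ((hf.mul (continuous_star.comp hg)).aestronglyMeasurable) (Cf * Cg) ?_)
  filter_upwards [hCf, hCg] with z h1 h2
  have h0f := norm_nonneg (f z)
  have h0g := norm_nonneg (g z)
  rw [norm_mul, RCLike.norm_conj]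
  exact mul_le_mul h1 h2 h0g (le_trans h0f h1)

private lemma int_mul_conj_mu (μ : Measure ℂ) [IsFiniteMeasure μ] (hcmp : IsCompact (msupp μ))
    (hfull : μ (msupp μ)ᶜ = 0) (p q : Polynomial ℂ) :
    Integrable (fun z => p.eval z * (starRingEnd ℂ) (q.eval z)) μ := by
  obtain ⟨Cp, _, hCp⟩ := poly_bound _ hcmp p
  obtain ⟨Cq, _, hCq⟩ := poly_bound _ hcmp q
  refine integrable_mul_conj μ _ _ p.continuous q.continuous Cp Cq ?_ ?_ <;>
    filter_upwards [ae_mem_msupp μ hfull] with z hz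
  · exact hCp z hz
  · exact hCq z hz

private lemma int_mul_conj_m (m : Measure ℂ)
    (hm : m = Measure.map (fun θ : ℝ => Complex.exp (θ * Complex.I))
      ((ENNReal.ofReal (2 * π))⁻¹ • volume.restrict (Set.Ioc (0 : ℝ) (2 * π))))
    (p q : Polynomial ℂ) :
    Integrable (fun z => p.eval z * (starRingEnd ℂ) (q.eval z)) m := by
  haveI := m_finite m hm
  obtain ⟨Cp, _, hCp⟩ := poly_bound (Metric.sphere 0 1) (isCompact_sphere 0 1) p
  obtain ⟨Cq, _, hCq⟩ := poly_bound (Metric.sphere 0 1) (isCompact_sphere 0 1) q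
  refine integrable_mul_conj m _ _ p.continuous q.continuous Cp Cq ?_ ?_ <;>
    filter_upwards [m_ae_norm_one m hm] with z hz
  · exact hCp z (mem_sphere_zero_iff_norm.mpr hz)
  · exact hCq z (mem_sphere_zero_iff_norm.mpr hz)

end StmtTwelveAux

noncomputable section StmtTwelveAux2

private lemma S_re (μ : Measure ℂ) [IsFiniteMeasure μ] (hcmp : IsCompact (msupp μ))
    (hfull : μ (msupp μ)ᶜ = 0)
    (m : Measure ℂ)
    (hm : m = Measure.map (fun θ : ℝ => Complex.exp (θ * Complex.I))
      ((ENNReal.ofReal (2 * π))⁻¹ • volume.restrict (Set.Ioc (0 : ℝ) (2 * π))))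
    (S : Polynomial ℂ → Polynomial ℂ → ℂ)
    (hS : ∀ p q : Polynomial ℂ, S p q =
      (∫ z, p.eval z * (starRingEnd ℂ) (q.eval z) ∂μ) +
      ∫ z, (derivative p).eval z * (starRingEnd ℂ) ((derivative q).eval z) ∂m)
    (p : Polynomial ℂ) :
    (S p p).re = (∫ z, ‖p.eval z‖ ^ 2 ∂μ) + ∫ z, ‖(derivative p).eval z‖ ^ 2 ∂m := by
  rw [hS, Complex.add_re,
    integral_mul_conj_re μ _ (int_mul_conj_mu μ hcmp hfull p p),
    integral_mul_conj_re m _ (int_mul_conj_m m hm (derivative p) (derivative p))]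

private lemma S_inner (μ : Measure ℂ) (m : Measure ℂ)
    (S : Polynomial ℂ → Polynomial ℂ → ℂ)
    (hS : ∀ p q : Polynomial ℂ, S p q =
      (∫ z, p.eval z * (starRingEnd ℂ) (q.eval z) ∂μ) +
      ∫ z, (derivative p).eval z * (starRingEnd ℂ) ((derivative q).eval z) ∂m)
    (p q : Polynomial ℂ)
    (hpμ : MemLp (fun z => p.eval z) 2 μ) (hqμ : MemLp (fun z => q.eval z) 2 μ)
    (hpm : MemLp (fun z => (derivative p).eval z) 2 m)
    (hqm : MemLp (fun z => (derivative q).eval z) 2 m) :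
    (inner ℂ ((WithLp.equiv 2 (Lp ℂ 2 μ × Lp ℂ 2 m)).symm (hqμ.toLp _, hqm.toLp _))
      ((WithLp.equiv 2 (Lp ℂ 2 μ × Lp ℂ 2 m)).symm (hpμ.toLp _, hpm.toLp _)) : ℂ) = S p q := by
  rw [WithLp.prod_inner_apply, hS]
  congr 1
  · simp only [WithLp.equiv_symm_apply, WithLp.ofLp_toLp]
    rw [L2.inner_def]
    refine integral_congr_ae ?_
    filter_upwards [hqμ.coeFn_toLp, hpμ.coeFn_toLp] with z h1 h2
    rw [h1, h2, RCLike.inner_apply, mul_comm]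
  · simp only [WithLp.equiv_symm_apply, WithLp.ofLp_toLp]
    rw [L2.inner_def]
    refine integral_congr_ae ?_
    filter_upwards [hqm.coeFn_toLp, hpm.coeFn_toLp] with z h1 h2
    rw [h1, h2, RCLike.inner_apply, mul_comm]

end StmtTwelveAux2

/-- If `μ` has compact infinite support and the smallest eigenvalues `λₙ`
of the truncated moment matrices of `μ` have a positive limit, then the multiplication
operator is bounded for `⟨p,q⟩_S = ∫ p q̄ dμ + ∫ p' q̄' dm` (`m` normalized Lebesgue
measure on the unit circle), and the zeros of the Sobolev orthogonal polynomials are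
uniformly bounded. -/
theorem stmt_12 (μ : Measure ℂ) [IsFiniteMeasure μ]
    (hcmp : IsCompact (msupp μ)) (hinf : (msupp μ).Infinite)
    (hfull : μ (msupp μ)ᶜ = 0)
    (lam : ℕ → ℝ)
    (hlam : ∀ n : ℕ, IsGLB {r : ℝ | ∃ p : Polynomial ℂ, p ≠ 0 ∧ p.degree ≤ n ∧
      r = (∫ z, ‖p.eval z‖ ^ 2 ∂μ) / ∑ i ∈ Finset.range (n + 1), ‖p.coeff i‖ ^ 2} (lam n))
    (hlampos : ∃ L : ℝ, 0 < L ∧ Tendsto lam atTop (nhds L))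
    (m : Measure ℂ)
    (hm : m = Measure.map (fun θ : ℝ => Complex.exp (θ * Complex.I))
      ((ENNReal.ofReal (2 * π))⁻¹ • volume.restrict (Set.Ioc (0 : ℝ) (2 * π))))
    (S : Polynomial ℂ → Polynomial ℂ → ℂ)
    (hS : ∀ p q : Polynomial ℂ, S p q =
      (∫ z, p.eval z * (starRingEnd ℂ) (q.eval z) ∂μ) +
      ∫ z, (derivative p).eval z * (starRingEnd ℂ) ((derivative q).eval z) ∂m) :
    (∃ K : ℝ, 0 < K ∧ ∀ p : Polynomial ℂ,
        (S (X * p) (X * p)).re ≤ K ^ 2 * (S p p).re) ∧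
      ∃ R : ℝ, 0 < R ∧ ∀ (n : ℕ) (φ : Polynomial ℂ), φ ≠ 0 → φ.natDegree = n →
        (∀ q : Polynomial ℂ, q.degree < n → S φ q = 0) →
        ∀ z₀ : ℂ, φ.eval z₀ = 0 → ‖z₀‖ < R := by
  obtain ⟨L, hL, hlim⟩ := hlampos
  haveI hmfin : IsFiniteMeasure m := m_finite m hm
  obtain ⟨r0, hr0⟩ := hcmp.isBounded.subset_closedBall 0
  set R0 : ℝ := max r0 0 with hR0def
  have hR0 : ∀ z ∈ msupp μ, ‖z‖ ≤ R0 := fun z hz =>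
    le_trans (by simpa [mem_closedBall_zero_iff] using hr0 hz) (le_max_left _ _)
  set K : ℝ := Real.sqrt (max (R0 ^ 2 + 2 * L⁻¹) 2) with hKdef
  have hKsq : K ^ 2 = max (R0 ^ 2 + 2 * L⁻¹) 2 :=
    Real.sq_sqrt (le_trans (by norm_num) (le_max_right _ _))
  have hK : 0 < K := Real.sqrt_pos.mpr (lt_of_lt_of_le (by norm_num) (le_max_right _ _))
  have hmain : ∀ p : Polynomial ℂ, (S (X * p) (X * p)).re ≤ K ^ 2 * (S p p).re := by
    intro p
    rw [S_re μ hcmp hfull m hm S hS, S_re μ hcmp hfull m hm S hS]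
    have h1 := mul_bound_mu μ hcmp hfull R0 hR0 p
    have h2 := deriv_bound_m m hm p
    have h3 : ∫ z, ‖p.eval z‖ ^ 2 ∂m ≤ L⁻¹ * ∫ z, ‖p.eval z‖ ^ 2 ∂μ := by
      rw [parseval m hm p]
      have h := coeff_bound μ lam hlam L hL hlim p
      calc (∑ i ∈ Finset.range (p.natDegree + 1), ‖p.coeff i‖ ^ 2)
          = L⁻¹ * (L * ∑ i ∈ Finset.range (p.natDegree + 1), ‖p.coeff i‖ ^ 2) := by
            field_simp
        _ ≤ L⁻¹ * ∫ z, ‖p.eval z‖ ^ 2 ∂μ := mul_le_mul_of_nonneg_left h (by positivity)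
    have h4 : 0 ≤ ∫ z, ‖p.eval z‖ ^ 2 ∂μ := integral_nonneg fun z => by positivity
    have h5 : 0 ≤ ∫ z, ‖(derivative p).eval z‖ ^ 2 ∂m := integral_nonneg fun z => by positivity
    have h6 : 0 ≤ ∫ z, ‖p.eval z‖ ^ 2 ∂m := integral_nonneg fun z => by positivity
    have hK1 : R0 ^ 2 + 2 * L⁻¹ ≤ K ^ 2 := hKsq ▸ le_max_left _ _
    have hK2 : (2 : ℝ) ≤ K ^ 2 := hKsq ▸ le_max_right _ _
    have hLinv : (0:ℝ) ≤ L⁻¹ := by positivity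
    nlinarith [mul_le_mul_of_nonneg_right hK1 h4, mul_le_mul_of_nonneg_right hK2 h5]
  refine ⟨⟨K, hK, hmain⟩, K + 1, by linarith, ?_⟩
  intro n φ hφ0 hφdeg horth z₀ hroot
  rcases Nat.eq_zero_or_pos n with hn0 | hnpos
  · exfalso
    subst hn0
    have hC := eq_C_of_natDegree_eq_zero hφdeg
    rw [hC] at hroot
    simp only [eval_C] at hroot
    exact hφ0 (by rw [hC, hroot, map_zero])
  · obtain ⟨ψ, hψ⟩ := dvd_iff_isRoot.mpr hroot
    have hXsub : (X - C z₀ : Polynomial ℂ) ≠ 0 := X_sub_C_ne_zero z₀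
    have hψ0 : ψ ≠ 0 := by
      rintro rfl
      rw [mul_zero] at hψ
      exact hφ0 hψ
    have hψdeg : ψ.degree < (n : ℕ) := by
      have h1 : φ.natDegree = 1 + ψ.natDegree := by
        rw [hψ, natDegree_mul hXsub hψ0, natDegree_X_sub_C]
      have h2 : ψ.natDegree < n := by omega
      exact (natDegree_lt_iff_degree_lt hψ0).mp h2
    have horthψ : S φ ψ = 0 := horth ψ hψdeg
    have hXψ : X * ψ = φ + C z₀ * ψ := by rw [hψ]; ring
    have hsum : S (X * ψ) ψ = S φ ψ + z₀ * S ψ ψ := by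
      have e1 : ∀ z : ℂ, (X * ψ).eval z * (starRingEnd ℂ) (ψ.eval z)
          = φ.eval z * (starRingEnd ℂ) (ψ.eval z)
            + z₀ * (ψ.eval z * (starRingEnd ℂ) (ψ.eval z)) := by
        intro z
        rw [hXψ]
        simp only [eval_add, eval_mul, eval_C]
        ring
      have e2 : ∀ z : ℂ, (derivative (X * ψ)).eval z * (starRingEnd ℂ) ((derivative ψ).eval z)
          = (derivative φ).eval z * (starRingEnd ℂ) ((derivative ψ).eval z)
            + z₀ * ((derivative ψ).eval z * (starRingEnd ℂ) ((derivative ψ).eval z)) := by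
        intro z
        have hder : derivative (X * ψ) = derivative φ + C z₀ * derivative ψ := by
          rw [hXψ, derivative_add, derivative_C_mul]
        rw [hder]
        simp only [eval_add, eval_mul, eval_C]
        ring
      rw [hS (X * ψ) ψ, hS φ ψ, hS ψ ψ]
      simp_rw [e1, e2]
      rw [integral_add (int_mul_conj_mu μ hcmp hfull φ ψ)
            ((int_mul_conj_mu μ hcmp hfull ψ ψ).const_mul z₀),
          integral_add (int_mul_conj_m m hm (derivative φ) (derivative ψ))
            ((int_mul_conj_m m hm (derivative ψ) (derivative ψ)).const_mul z₀),
          integral_const_mul, integral_const_mul]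
      ring
    have halg : S (X * ψ) ψ = z₀ * S ψ ψ := by rw [hsum, horthψ, zero_add]
    -- Hilbert space embedding
    have hxy := S_inner μ m S hS (X * ψ) ψ (memLp_mu μ hcmp hfull (X * ψ))
      (memLp_mu μ hcmp hfull ψ) (memLp_m m hm (derivative (X * ψ))) (memLp_m m hm (derivative ψ))
    have hxx := S_inner μ m S hS ψ ψ (memLp_mu μ hcmp hfull ψ)
      (memLp_mu μ hcmp hfull ψ) (memLp_m m hm (derivative ψ)) (memLp_m m hm (derivative ψ))
    have hyy := S_inner μ m S hS (X * ψ) (X * ψ) (memLp_mu μ hcmp hfull (X * ψ))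
      (memLp_mu μ hcmp hfull (X * ψ)) (memLp_m m hm (derivative (X * ψ)))
      (memLp_m m hm (derivative (X * ψ)))
    set x : WithLp 2 (Lp ℂ 2 μ × Lp ℂ 2 m) := (WithLp.equiv 2 (Lp ℂ 2 μ × Lp ℂ 2 m)).symm
      ((memLp_mu μ hcmp hfull ψ).toLp _, (memLp_m m hm (derivative ψ)).toLp _) with hxdef
    set y : WithLp 2 (Lp ℂ 2 μ × Lp ℂ 2 m) := (WithLp.equiv 2 (Lp ℂ 2 μ × Lp ℂ 2 m)).symm
      ((memLp_mu μ hcmp hfull (X * ψ)).toLp _, (memLp_m m hm (derivative (X * ψ))).toLp _) with hydef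
    have hre_xx : (S ψ ψ).re = ‖x‖ ^ 2 := by
      rw [← hxx, ← RCLike.re_to_complex]
      exact inner_self_eq_norm_sq x
    have hre_yy : (S (X * ψ) (X * ψ)).re = ‖y‖ ^ 2 := by
      rw [← hyy, ← RCLike.re_to_complex]
      exact inner_self_eq_norm_sq y
    have hSψψ : S ψ ψ = ((‖x‖ ^ 2 : ℝ) : ℂ) := by
      rw [← hxx, inner_self_eq_norm_sq_to_K]
      norm_cast
    have hx_pos : 0 < ‖x‖ := by
      have h1 : 0 < (S ψ ψ).re := by
        rw [S_re μ hcmp hfull m hm S hS]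
        have h2 := integral_sq_pos μ hcmp hinf hfull ψ hψ0
        have h3 : 0 ≤ ∫ z, ‖(derivative ψ).eval z‖ ^ 2 ∂m := integral_nonneg fun z => by positivity
        linarith
      rw [hre_xx] at h1
      nlinarith [norm_nonneg x]
    have hy_le : ‖y‖ ≤ K * ‖x‖ := by
      have h1 := hmain ψ
      rw [hre_yy, hre_xx] at h1
      have h2 : ‖y‖ ^ 2 ≤ (K * ‖x‖) ^ 2 := by rw [mul_pow]; exact h1
      have h3 := Real.sqrt_le_sqrt h2
      rw [Real.sqrt_sq (norm_nonneg y), Real.sqrt_sq (mul_nonneg hK.le (norm_nonneg x))] at h3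
      exact h3
    have hcs : ‖(inner ℂ x y : ℂ)‖ ≤ ‖x‖ * ‖y‖ := norm_inner_le_norm x y
    rw [hxy, halg, hSψψ] at hcs
    have hnorm : ‖z₀ * ((‖x‖ ^ 2 : ℝ) : ℂ)‖ = ‖z₀‖ * ‖x‖ ^ 2 := by
      rw [norm_mul, Complex.norm_real, Real.norm_eq_abs, abs_of_nonneg (sq_nonneg _)]
    rw [hnorm] at hcs
    have hfin : ‖z₀‖ ≤ K := by nlinarith [mul_le_mul_of_nonneg_left hy_le (norm_nonneg x), hcs, hx_pos, mul_pos hx_pos hx_pos]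
    linarith
end

section
/- Let ⟨·,·⟩ be an inner product on complex polynomials induced by an infinite Hermitian positive definite matrix and suppose the multiplication operator D is bounded. Then for every n ≥ 1, the n-th orthogonal polynomial φₙ (monic, say) satisfies: φₙ has exactly n zeros counted with multiplicity, all lying in the open disk of radius ‖D‖ centered at 0. -/
/-!
If `z₀` is a root of `φ`, write `φ = (X - z₀) P`. Then `X P = φ + z₀ P` with `deg P < deg φ`,
so `P ⟂ φ` and Pythagoras gives `‖X P‖² = ‖φ‖² + |z₀|² ‖P‖²`. Since `‖φ‖ > 0` and
`‖X P‖² ≤ ‖D‖² ‖P‖²`, this forces `|z₀| < ‖D‖`.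
-/

open Polynomial ComplexConjugate

section HermitianForm

variable {M : Type*} {ip : M → M → ℂ}

theorem hermitian_add_right [Add M] (hadd : ∀ p q r, ip (p + q) r = ip p r + ip q r)
    (hsymm : ∀ p q, ip q p = conj (ip p q)) (p q r : M) :
    ip p (q + r) = ip p q + ip p r := by
  rw [hsymm, hadd, map_add, ← hsymm, ← hsymm]

theorem hermitian_smul_right [SMul ℂ M] (hsmul : ∀ (a : ℂ) p q, ip (a • p) q = a * ip p q)
    (hsymm : ∀ p q, ip q p = conj (ip p q)) (a : ℂ) (p q : M) :
    ip p (a • q) = conj a * ip p q := by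
  rw [hsymm, hsmul, map_mul, ← hsymm]

theorem re_hermitian_add_smul_self_of_orthogonal [Add M] [SMul ℂ M]
    (hadd : ∀ p q r, ip (p + q) r = ip p r + ip q r)
    (hsmul : ∀ (a : ℂ) p q, ip (a • p) q = a * ip p q)
    (hsymm : ∀ p q, ip q p = conj (ip p q)) {u v : M} (huv : ip u v = 0) (a : ℂ) :
    (ip (u + a • v) (u + a • v)).re = (ip u u).re + Complex.normSq a * (ip v v).re := by
  have hvu : ip v u = 0 := by rw [hsymm, huv, map_zero]
  have hexpand : ip (u + a • v) (u + a • v) = ip u u + (Complex.normSq a : ℂ) * ip v v := by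
    simp only [hadd, hermitian_add_right hadd hsymm, hsmul, hermitian_smul_right hsmul hsymm,
      huv, hvu, Complex.normSq_eq_conj_mul_self]
    ring
  rw [hexpand, Complex.add_re, Complex.re_ofReal_mul]

end HermitianForm

theorem Polynomial.X_mul_divByMonic_X_sub_C {R : Type*} [CommRing R] {φ : R[X]} {z : R}
    (hz : φ.IsRoot z) : X * (φ /ₘ (X - C z)) = φ + z • (φ /ₘ (X - C z)) := by
  rw [smul_eq_C_mul]
  linear_combination mul_divByMonic_eq_iff_isRoot.mpr hz

theorem norm_lt_of_mem_roots_of_orthogonal {ip : ℂ[X] → ℂ[X] → ℂ}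
    (hadd : ∀ p q r, ip (p + q) r = ip p r + ip q r)
    (hsmul : ∀ (a : ℂ) p q, ip (a • p) q = a * ip p q)
    (hsymm : ∀ p q, ip q p = conj (ip p q))
    (hdef : ∀ p, p ≠ 0 → 0 < (ip p p).re)
    {Dn : ℝ} (hDn : 0 ≤ Dn) (hbound : ∀ p, (ip (X * p) (X * p)).re ≤ Dn ^ 2 * (ip p p).re)
    {φ : ℂ[X]} (horth : ∀ q, q.degree < φ.degree → ip φ q = 0) {z₀ : ℂ} (hz₀ : z₀ ∈ φ.roots) :
    ‖z₀‖ < Dn := by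
  have hφ : φ ≠ 0 := ne_zero_of_mem_roots hz₀
  set P := φ /ₘ (X - C z₀)
  have hP : P ≠ 0 := by
    intro h
    apply hφ
    rw [← mul_divByMonic_eq_iff_isRoot.mpr (isRoot_of_mem_roots hz₀)]
    exact mul_eq_zero_of_right _ h
  have hPdeg : P.degree < φ.degree :=
    degree_divByMonic_lt φ _ hφ (by rw [degree_X_sub_C]; exact one_pos)
  have hpyth : (ip (X * P) (X * P)).re = (ip φ φ).re + Complex.normSq z₀ * (ip P P).re := by
    rw [X_mul_divByMonic_X_sub_C (isRoot_of_mem_roots hz₀)]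
    exact re_hermitian_add_smul_self_of_orthogonal hadd hsmul hsymm (horth P hPdeg) z₀
  have hnormSq : Complex.normSq z₀ * (ip P P).re < Dn ^ 2 * (ip P P).re := by
    linarith [hbound P, hdef φ hφ]
  have hsq : ‖z₀‖ ^ 2 < Dn ^ 2 := by
    rw [Complex.sq_norm]
    exact lt_of_mul_lt_mul_right hnormSq (hdef P hP).le
  exact lt_of_pow_lt_pow_left₀ 2 hDn hsq

theorem stmt_15_general (ip : Polynomial ℂ → Polynomial ℂ → ℂ)
    (hadd : ∀ p q r : Polynomial ℂ, ip (p + q) r = ip p r + ip q r)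
    (hsmul : ∀ (a : ℂ) (p q : Polynomial ℂ), ip (a • p) q = a * ip p q)
    (hsymm : ∀ p q : Polynomial ℂ, ip q p = (starRingEnd ℂ) (ip p q))
    (hdef : ∀ p : Polynomial ℂ, p ≠ 0 → 0 < (ip p p).re)
    (Dn : ℝ) (hDn : 0 ≤ Dn)
    (hbound : ∀ p : Polynomial ℂ, (ip (X * p) (X * p)).re ≤ Dn ^ 2 * (ip p p).re)
    (n : ℕ) (φ : Polynomial ℂ) (hdeg : φ.natDegree = n)
    (horth : ∀ q : Polynomial ℂ, q.degree < n → ip φ q = 0) :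
    Multiset.card φ.roots = n ∧ ∀ z₀ ∈ φ.roots, ‖z₀‖ < Dn := by
  refine ⟨hdeg ▸ IsAlgClosed.card_roots_eq_natDegree, fun z₀ hz₀ => ?_⟩
  refine norm_lt_of_mem_roots_of_orthogonal hadd hsmul hsymm hdef hDn hbound
    (fun q hq => horth q ?_) hz₀
  rwa [degree_eq_natDegree (ne_zero_of_mem_roots hz₀), hdeg] at hq

/-- If the multiplication operator is bounded with norm `Dn` for an inner
product on complex polynomials, then for every `n ≥ 1` the monic `n`-th orthogonal
polynomial has exactly `n` roots counted with multiplicity, all lying in the open disk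
of radius `Dn` centered at `0`. -/
theorem stmt_15 (ip : Polynomial ℂ → Polynomial ℂ → ℂ)
    (hadd : ∀ p q r : Polynomial ℂ, ip (p + q) r = ip p r + ip q r)
    (hsmul : ∀ (a : ℂ) (p q : Polynomial ℂ), ip (a • p) q = a * ip p q)
    (hsymm : ∀ p q : Polynomial ℂ, ip q p = (starRingEnd ℂ) (ip p q))
    (hdef : ∀ p : Polynomial ℂ, p ≠ 0 → 0 < (ip p p).re)
    (Dn : ℝ) (hDn : 0 ≤ Dn)
    (hbound : ∀ p : Polynomial ℂ, (ip (X * p) (X * p)).re ≤ Dn ^ 2 * (ip p p).re)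
    (n : ℕ) (hn : 1 ≤ n) (φ : Polynomial ℂ) (hmonic : φ.Monic) (hdeg : φ.natDegree = n)
    (horth : ∀ q : Polynomial ℂ, q.degree < n → ip φ q = 0) :
    Multiset.card φ.roots = n ∧ ∀ z₀ ∈ φ.roots, ‖z₀‖ < Dn :=
  stmt_15_general ip hadd hsmul hsymm hdef Dn hDn hbound n φ hdeg horth
end
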